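/- For any finite family of vectors x₁,…,x_s ∈ ℝ^d and any β⁽¹⁾, β⁽²⁾ ∈ ℝ^d, the identity (∑ᵢ exp(β⁽¹⁾·xᵢ))·(∑ᵢ exp(β⁽²⁾·xᵢ)) − (∑ᵢ exp(((β⁽¹⁾+β⁽²⁾)/2)·xᵢ))² = ∑_{i<j} (exp((β⁽¹⁾·xᵢ + β⁽²⁾·xⱼ)/2) − exp((β⁽¹⁾·xⱼ + β⁽²⁾·xᵢ)/2))² holds. -/
import Mathlib

lemma lagrange_aux (s : ℕ) (u v : Fin s → ℝ) :
    (∑ i, u i ^ 2) * (∑ i, v i ^ 2) - (∑ i, u i * v i) ^ 2 =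
    ∑ i, ∑ j, if i < j then (u i * v j - u j * v i) ^ 2 else 0 := by
  have full : ∑ i, ∑ j, (u i * v j - u j * v i) ^ 2 =
      2 * ((∑ i, u i ^ 2) * (∑ i, v i ^ 2) - (∑ i, u i * v i) ^ 2) := by
    have h : ∀ i j : Fin s, (u i * v j - u j * v i) ^ 2 =
        u i ^ 2 * v j ^ 2 + u j ^ 2 * v i ^ 2 - 2 * ((u i * v i) * (u j * v j)) := by
      intros; ring
    have A : ∑ i, ∑ j, u i ^ 2 * v j ^ 2 = (∑ i, u i ^ 2) * (∑ i, v i ^ 2) :=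
      (Finset.sum_mul_sum _ _ _ _).symm
    have B : ∑ i : Fin s, ∑ j, u j ^ 2 * v i ^ 2 = (∑ i, u i ^ 2) * (∑ i, v i ^ 2) := by
      rw [Finset.sum_comm]; exact A
    have C : ∑ i : Fin s, ∑ j, (u i * v i) * (u j * v j) = (∑ i, u i * v i) ^ 2 := by
      rw [sq, Finset.sum_mul_sum]
    calc ∑ i, ∑ j, (u i * v j - u j * v i) ^ 2
        = (∑ i, ∑ j, u i ^ 2 * v j ^ 2) + (∑ i : Fin s, ∑ j, u j ^ 2 * v i ^ 2)
            - 2 * (∑ i : Fin s, ∑ j, (u i * v i) * (u j * v j)) := by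
          simp_rw [h, Finset.sum_sub_distrib, Finset.sum_add_distrib, ← Finset.mul_sum]
      _ = 2 * ((∑ i, u i ^ 2) * (∑ i, v i ^ 2) - (∑ i, u i * v i) ^ 2) := by
          rw [A, B, C]; ring
  have split : ∑ i, ∑ j, (u i * v j - u j * v i) ^ 2 =
      (∑ i, ∑ j, if i < j then (u i * v j - u j * v i) ^ 2 else 0) +
      (∑ i, ∑ j, if j < i then (u i * v j - u j * v i) ^ 2 else 0) := by
    rw [← Finset.sum_add_distrib]
    refine Finset.sum_congr rfl fun i _ => ?_
    rw [← Finset.sum_add_distrib]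
    refine Finset.sum_congr rfl fun j _ => ?_
    rcases lt_trichotomy i j with h | h | h
    · simp [h, not_lt.mpr h.le]
    · subst h; simp
    · simp [h, not_lt.mpr h.le]
  have symm : (∑ i, ∑ j, if j < i then (u i * v j - u j * v i) ^ 2 else 0) =
      ∑ i, ∑ j, if i < j then (u i * v j - u j * v i) ^ 2 else 0 := by
    rw [Finset.sum_comm]
    refine Finset.sum_congr rfl fun i _ => ?_
    refine Finset.sum_congr rfl fun j _ => ?_
    rcases lt_or_ge i j with h | h
    · simp [h]; ring
    · simp [not_lt.mpr h]
  rw [split, symm, ← two_mul] at full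
  linarith

/-- Sum-of-squares decomposition underlying strict concavity of the PL-with-features
log-likelihood. -/
theorem stmt_1 (d s : ℕ) (x : Fin s → Fin d → ℝ) (β₁ β₂ : Fin d → ℝ) :
    (∑ i, Real.exp (∑ r, β₁ r * x i r)) * (∑ i, Real.exp (∑ r, β₂ r * x i r)) -
      (∑ i, Real.exp (∑ r, ((β₁ r + β₂ r) / 2) * x i r)) ^ 2 =
    ∑ i, ∑ j, if i < j then
        (Real.exp (((∑ r, β₁ r * x i r) + (∑ r, β₂ r * x j r)) / 2) -
         Real.exp (((∑ r, β₁ r * x j r) + (∑ r, β₂ r * x i r)) / 2)) ^ 2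
      else 0 := by
  set a : Fin s → ℝ := fun i => ∑ r, β₁ r * x i r with ha
  set b : Fin s → ℝ := fun i => ∑ r, β₂ r * x i r with hb
  have hmid : ∀ i, (∑ r, ((β₁ r + β₂ r) / 2) * x i r) = (a i + b i) / 2 := by
    intro i
    simp only [ha, hb, ← Finset.sum_add_distrib, Finset.sum_div]
    exact Finset.sum_congr rfl fun r _ => by ring
  have key := lagrange_aux s (fun i => Real.exp (a i / 2)) (fun i => Real.exp (b i / 2))
  have e1 : ∀ t : ℝ, Real.exp (t / 2) ^ 2 = Real.exp t := by
    intro t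
    rw [sq, ← Real.exp_add]; ring_nf
  have e2 : ∀ t u : ℝ, Real.exp (t / 2) * Real.exp (u / 2) = Real.exp ((t + u) / 2) := by
    intro t u
    rw [← Real.exp_add]; ring_nf
  simp only [e1, e2] at key
  simp only [hmid]
  exact key
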